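/- arXiv:2405.07020 — 2 statements merged into one kernel-verified Lean document; each statement's English description precedes it below -/
import Mathlib

section
/- For real numbers a, b with 0 < b ≤ a ≤ 1, we have ln(a/b) ≥ (a-b)/a + (a-b)²/2. -/
/-! With `u = (a - b) / a ∈ [0, 1)` we have `log (a / b) = -log (1 - u) ≥ u + u² / 2` by the
logarithmic series, and `(a - b)² = a² u² ≤ u²` because `a ≤ 1`. -/

open Real

theorem add_sq_div_two_le_neg_log_one_sub {u : ℝ} (hu₀ : 0 ≤ u) (hu₁ : u < 1) :
    u + u ^ 2 / 2 ≤ -log (1 - u) := by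
  have hseries := hasSum_pow_div_log_of_abs_lt_one (abs_lt.mpr ⟨by linarith, hu₁⟩)
  have hpartial := sum_le_hasSum (Finset.range 2) (fun n _ => by positivity) hseries
  norm_num [Finset.sum_range_succ] at hpartial
  linarith

theorem log_div_ge (a b : ℝ) (hb : 0 < b) (hba : b ≤ a) (ha : a ≤ 1) :
    Real.log (a / b) ≥ (a - b) / a + (a - b) ^ 2 / 2 := by
  have ha₀ : 0 < a := hb.trans_le hba
  set u := (a - b) / a with hu
  have hu₀ : 0 ≤ u := div_nonneg (sub_nonneg.mpr hba) ha₀.le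
  have hbu : b / a = 1 - u := by rw [hu]; field_simp; ring
  have hu₁ : u < 1 := by linarith [div_pos hb ha₀]
  have hlog : log (a / b) = -log (1 - u) := by rw [← hbu, ← log_inv, inv_div]
  have hsq : (a - b) ^ 2 ≤ u ^ 2 := by
    have : (a - b) ^ 2 = a ^ 2 * u ^ 2 := by rw [hu]; field_simp
    rw [this]
    exact mul_le_of_le_one_left (sq_nonneg u) (pow_le_one₀ ha₀.le ha)
  rw [hlog]
  linarith [add_sq_div_two_le_neg_log_one_sub hu₀ hu₁]
end

section
/- With the randomized response kernel g of the previous context (subset S of size k, parameters ε₁, ε₂ > 0 with ε₁ ≤ ε and ε₂ ≤ ε), for all x ∈ S, x' ∉ S and y ∉ S with y ≠ x', the ratio g(y|x)/g(y|x') = (e^{ε₂} + K − k − 1)/((K−k) e^{ε₁}) satisfies e^{−ε} ≤ g(y|x)/g(y|x') ≤ e^{ε}. -/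
open Real

noncomputable def rrrrKernel (K k : ℕ) (S : Finset (Fin K)) (ε₁ ε₂ : ℝ)
    (y x : Fin K) : ℝ :=
  if x ∈ S then
    if y ∈ S then
      (if x = y then exp ε₁ else 1) / (exp ε₁ + k)
    else
      (1 / ((K : ℝ) - k)) * (1 / (exp ε₁ + k))
  else
    if y ∈ S then
      1 / (exp ε₁ + k)
    else
      ((if x = y then exp ε₂ else 1) / (exp ε₂ + ((K : ℝ) - k - 1))) *
        (exp ε₁ / (exp ε₁ + k))

/-
With `m = K - k ≥ 1` the ratio is `(e^{ε₂} + m - 1) / (m e^{ε₁})`. Its numerator lies between `m`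
and `m e^ε` (each of its `m` summands `e^{ε₂}, 1, …, 1` lies in `[1, e^ε]`), and its denominator
between `m` and `m e^ε`, so the ratio lies in `[e^{-ε}, e^ε]`.
-/

theorem one_le_natCast_sub_natCast {k K : ℕ} (hkK : k < K) : (1 : ℝ) ≤ (K : ℝ) - k := by
  have : (k : ℝ) + 1 ≤ K := by exact_mod_cast hkK
  linarith

theorem rrrrKernel_div_of_mem_of_not_mem {K k : ℕ} (hkK : k < K) {S : Finset (Fin K)}
    (ε₁ ε₂ : ℝ) {x x' y : Fin K} (hx : x ∈ S) (hx' : x' ∉ S) (hy : y ∉ S) (hyx' : y ≠ x') :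
    rrrrKernel K k S ε₁ ε₂ y x / rrrrKernel K k S ε₁ ε₂ y x'
      = (exp ε₂ + ((K : ℝ) - k - 1)) / (((K : ℝ) - k) * exp ε₁) := by
  have hm := one_le_natCast_sub_natCast hkK
  have hd₁ : 0 < exp ε₁ + k := by positivity
  have hd₂ : 0 < exp ε₂ + ((K : ℝ) - k - 1) := by linarith [exp_pos ε₂]
  simp only [rrrrKernel, if_pos hx, if_neg hy, if_neg hx', if_neg (Ne.symm hyx')]
  field_simp

theorem exp_neg_le_exp_add_sub_one_div {m ε ε₁ ε₂ : ℝ} (hm : 1 ≤ m) (hε₁ε : ε₁ ≤ ε)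
    (hε₂ : 0 ≤ ε₂) :
    exp (-ε) ≤ (exp ε₂ + (m - 1)) / (m * exp ε₁) := by
  rw [exp_neg, inv_le_iff_one_le_mul₀ (exp_pos ε), div_mul_eq_mul_div, one_le_div (by positivity)]
  calc m * exp ε₁ ≤ m * exp ε := by gcongr
    _ ≤ (exp ε₂ + (m - 1)) * exp ε := by
      gcongr
      linarith [one_le_exp hε₂]

theorem exp_add_sub_one_div_le_exp {m ε ε₁ ε₂ : ℝ} (hm : 1 ≤ m) (hε₁ : 0 ≤ ε₁)
    (hε₂ : 0 ≤ ε₂) (hε₂ε : ε₂ ≤ ε) :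
    (exp ε₂ + (m - 1)) / (m * exp ε₁) ≤ exp ε := by
  have hexp : 1 ≤ exp ε := one_le_exp (hε₂.trans hε₂ε)
  rw [div_le_iff₀ (by positivity)]
  calc exp ε₂ + (m - 1) ≤ exp ε + (m - 1) * exp ε := by
        gcongr
        exact le_mul_of_one_le_right (by linarith) hexp
    _ = m * exp ε := by ring
    _ ≤ exp ε * (m * exp ε₁) := by
      rw [mul_comm]
      gcongr
      exact le_mul_of_one_le_right (by linarith) (one_le_exp hε₁)

theorem rrrrKernel_ratio_case_C4_general (K k : ℕ) (hkK : k < K)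
    (S : Finset (Fin K)) (ε ε₁ ε₂ : ℝ)
    (hε₁ : 0 < ε₁) (hε₁ε : ε₁ ≤ ε) (hε₂ : 0 < ε₂) (hε₂ε : ε₂ ≤ ε)
    (x x' y : Fin K) (hx : x ∈ S) (hx' : x' ∉ S) (hy : y ∉ S) (hyx' : y ≠ x') :
    rrrrKernel K k S ε₁ ε₂ y x / rrrrKernel K k S ε₁ ε₂ y x'
      = (exp ε₂ + ((K : ℝ) - k - 1)) / (((K : ℝ) - k) * exp ε₁) ∧
    exp (-ε) ≤ rrrrKernel K k S ε₁ ε₂ y x / rrrrKernel K k S ε₁ ε₂ y x' ∧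
    rrrrKernel K k S ε₁ ε₂ y x / rrrrKernel K k S ε₁ ε₂ y x' ≤ exp ε := by
  have hm := one_le_natCast_sub_natCast hkK
  rw [rrrrKernel_div_of_mem_of_not_mem hkK ε₁ ε₂ hx hx' hy hyx']
  exact ⟨rfl, exp_neg_le_exp_add_sub_one_div hm hε₁ε hε₂.le,
    exp_add_sub_one_div_le_exp hm hε₁.le hε₂.le hε₂ε⟩

theorem rrrrKernel_ratio_case_C4 (K k : ℕ) (hk : 0 < k) (hkK : k < K)
    (S : Finset (Fin K)) (hS : S.card = k) (ε ε₁ ε₂ : ℝ) (hε : 0 < ε)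
    (hε₁ : 0 < ε₁) (hε₁ε : ε₁ ≤ ε) (hε₂ : 0 < ε₂) (hε₂ε : ε₂ ≤ ε)
    (x x' y : Fin K) (hx : x ∈ S) (hx' : x' ∉ S) (hy : y ∉ S) (hyx' : y ≠ x') :
    rrrrKernel K k S ε₁ ε₂ y x / rrrrKernel K k S ε₁ ε₂ y x'
      = (exp ε₂ + ((K : ℝ) - k - 1)) / (((K : ℝ) - k) * exp ε₁) ∧
    exp (-ε) ≤ rrrrKernel K k S ε₁ ε₂ y x / rrrrKernel K k S ε₁ ε₂ y x' ∧
    rrrrKernel K k S ε₁ ε₂ y x / rrrrKernel K k S ε₁ ε₂ y x' ≤ exp ε :=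
  rrrrKernel_ratio_case_C4_general K k hkK S ε ε₁ ε₂ hε₁ hε₁ε hε₂ hε₂ε x x' y hx hx' hy hyx'
end
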